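/- arXiv:2302.09687 — 3 statements merged into one kernel-verified Lean document; each statement's English description precedes it below -/
import Mathlib

section
/- If f is Fréchet differentiable at the block circulant matrix bcirc(A) of a tensor A ∈ ℂ^{n×n×p}, then for every direction tensor C ∈ ℂ^{n×n×p}, the map C ↦ fold(L_f(bcirc(A), bcirc(C)) · E₁) is the Fréchet derivative of the tensor t-function f at A; in particular f(A+C) - f(A) - fold(L_f(bcirc(A),bcirc(C))·E₁) = o(‖C‖_F) as ‖C‖_F → 0. -/
/-- The block circulant matrix of a third-order tensor given by its frontal faces. -/
def bcirc {n p : ℕ} (A : Fin p → Matrix (Fin n) (Fin n) ℂ) :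
    Matrix (Fin p × Fin n) (Fin p × Fin n) ℂ :=
  fun ai bj => A (ai.1 - bj.1) ai.2 bj.2

/-- Frobenius norm of a third-order tensor. -/
noncomputable def frobT {n p : ℕ} (A : Fin p → Matrix (Fin n) (Fin n) ℂ) : ℝ :=
  Real.sqrt (∑ k : Fin p, ∑ i : Fin n, ∑ j : Fin n, ‖A k i j‖ ^ 2)

/-- Frobenius norm of a matrix. -/
noncomputable def frobM {α β : Type*} [Fintype α] [Fintype β] (M : Matrix α β ℂ) : ℝ :=
  Real.sqrt (∑ a : α, ∑ b : β, ‖M a b‖ ^ 2)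

/-- The tensor t-function induced by a matrix function `f`:
`f(A) := fold (f(bcirc A) · E₁)`, where `E₁ = e₁ ⊗ Iₙ`. -/
def tFun {n p : ℕ} [NeZero p]
    (f : Matrix (Fin p × Fin n) (Fin p × Fin n) ℂ → Matrix (Fin p × Fin n) (Fin p × Fin n) ℂ)
    (A : Fin p → Matrix (Fin n) (Fin n) ℂ) : Fin p → Matrix (Fin n) (Fin n) ℂ :=
  fun k i j => f (bcirc A) (k, i) ((0 : Fin p), j)

/-!
The t-function's remainder at `A` in direction `C` is `fold(· E₁)` of the matrix remainder of `f`
at `bcirc A` in direction `bcirc C`, because `bcirc` and `fold(· E₁)` are linear. Taking the first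
block column does not increase the Frobenius norm, while `bcirc` multiplies it by `√p`, so the
matrix bound for `ε / √p` yields the tensor bound for `ε`.
-/

section

variable {n p : ℕ}

/-- `fold (M · E₁)`: the tensor whose frontal faces are the blocks of the first block column. -/
def foldFirstBlockCol [NeZero p] (M : Matrix (Fin p × Fin n) (Fin p × Fin n) ℂ) :
    Fin p → Matrix (Fin n) (Fin n) ℂ :=
  fun k => Matrix.of fun i j => M (k, i) (0, j)

lemma tFun_eq_foldFirstBlockCol [NeZero p]
    (f : Matrix (Fin p × Fin n) (Fin p × Fin n) ℂ → Matrix (Fin p × Fin n) (Fin p × Fin n) ℂ)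
    (A : Fin p → Matrix (Fin n) (Fin n) ℂ) :
    tFun f A = foldFirstBlockCol (f (bcirc A)) :=
  rfl

lemma bcirc_add (A C : Fin p → Matrix (Fin n) (Fin n) ℂ) :
    bcirc (A + C) = bcirc A + bcirc C :=
  rfl

lemma frobT_foldFirstBlockCol_le [NeZero p] (M : Matrix (Fin p × Fin n) (Fin p × Fin n) ℂ) :
    frobT (foldFirstBlockCol M) ≤ frobM M := by
  unfold frobT frobM
  refine Real.sqrt_le_sqrt ?_
  simp only [Fintype.sum_prod_type]
  gcongr with k _ i _
  exact Finset.single_le_sum (f := fun b : Fin p => ∑ j : Fin n, ‖M (k, i) (b, j)‖ ^ 2)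
    (fun _ _ => by positivity) (Finset.mem_univ 0)

/-- Every block row of `bcirc C` is a permutation of the frontal faces of `C`. -/
lemma sum_norm_sq_bcirc [NeZero p] (C : Fin p → Matrix (Fin n) (Fin n) ℂ) :
    ∑ ai : Fin p × Fin n, ∑ bj : Fin p × Fin n, ‖bcirc C ai bj‖ ^ 2
      = p * ∑ k : Fin p, ∑ i : Fin n, ∑ j : Fin n, ‖C k i j‖ ^ 2 := by
  have block_row (a : Fin p) : ∑ i : Fin n, ∑ bj : Fin p × Fin n, ‖bcirc C (a, i) bj‖ ^ 2
      = ∑ k : Fin p, ∑ i : Fin n, ∑ j : Fin n, ‖C k i j‖ ^ 2 := by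
    rw [Finset.sum_comm, Fintype.sum_prod_type]
    refine Fintype.sum_equiv (Equiv.subLeft a) _ _ fun b => ?_
    exact Finset.sum_comm
  rw [Fintype.sum_prod_type, Finset.sum_congr rfl fun a _ => block_row a]
  simp

lemma frobM_bcirc [NeZero p] (C : Fin p → Matrix (Fin n) (Fin n) ℂ) :
    frobM (bcirc C) = Real.sqrt p * frobT C := by
  rw [frobM, frobT, sum_norm_sq_bcirc, Real.sqrt_mul (Nat.cast_nonneg p)]

end

/-- If `f` is Fréchet differentiable at `bcirc A` with derivative `L`, then the map
`C ↦ fold (L(bcirc C) · E₁)` is the Fréchet derivative of the tensor t-function at `A`: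
`f(A+C) - f(A) - fold (L(bcirc C)·E₁) = o(‖C‖_F)` as `‖C‖_F → 0`. -/
theorem tFrechet_of_matrix_frechet {n p : ℕ} [NeZero p]
    (f : Matrix (Fin p × Fin n) (Fin p × Fin n) ℂ → Matrix (Fin p × Fin n) (Fin p × Fin n) ℂ)
    (A : Fin p → Matrix (Fin n) (Fin n) ℂ)
    (L : Matrix (Fin p × Fin n) (Fin p × Fin n) ℂ →ₗ[ℂ] Matrix (Fin p × Fin n) (Fin p × Fin n) ℂ)
    (hL : ∀ ε > (0 : ℝ), ∃ δ > (0 : ℝ), ∀ E : Matrix (Fin p × Fin n) (Fin p × Fin n) ℂ,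
      frobM E < δ → frobM (f (bcirc A + E) - f (bcirc A) - L E) ≤ ε * frobM E) :
    ∀ ε > (0 : ℝ), ∃ δ > (0 : ℝ), ∀ C : Fin p → Matrix (Fin n) (Fin n) ℂ,
      frobT C < δ →
        frobT (fun k => tFun f (A + C) k - tFun f A k -
            Matrix.of (fun i j => L (bcirc C) (k, i) ((0 : Fin p), j))) ≤ ε * frobT C := by
  intro ε hε
  have hp : 0 < Real.sqrt p := Real.sqrt_pos.mpr (Nat.cast_pos.mpr (NeZero.pos p))
  obtain ⟨δ, hδ, hremainder⟩ := hL (ε / Real.sqrt p) (by positivity)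
  refine ⟨δ / Real.sqrt p, by positivity, fun C hC => ?_⟩
  have hsmall : frobM (bcirc C) < δ := by
    rwa [frobM_bcirc, ← lt_div_iff₀' hp]
  have hfold : (fun k => tFun f (A + C) k - tFun f A k -
      Matrix.of (fun i j => L (bcirc C) (k, i) ((0 : Fin p), j)))
      = foldFirstBlockCol (f (bcirc A + bcirc C) - f (bcirc A) - L (bcirc C)) := by
    rw [tFun_eq_foldFirstBlockCol, tFun_eq_foldFirstBlockCol, bcirc_add]
    rfl
  calc _ = frobT (foldFirstBlockCol (f (bcirc A + bcirc C) - f (bcirc A) - L (bcirc C))) := by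
        rw [hfold]
    _ ≤ frobM (f (bcirc A + bcirc C) - f (bcirc A) - L (bcirc C)) :=
        frobT_foldFirstBlockCol_le _
    _ ≤ ε / Real.sqrt p * frobM (bcirc C) := hremainder _ hsmall
    _ = ε * frobT C := by rw [frobM_bcirc]; field_simp
end

section
/- The pairing ⟨A, B⟩ := trace₍₁₎(Bᴴ * A) defines an inner product on ℂ^{n×n×p}, coinciding with the standard inner product of the vectorized tensors: trace₍₁₎(Bᴴ * A) = Σ_{i,j,k} conj(B(i,j,k)) · A(i,j,k). -/
open Matrix
open scoped ComplexConjugate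

/-- `unfold` stacks the frontal faces of a tensor vertically into a block column. -/
def unfold {n p : ℕ} (B : Fin p → Matrix (Fin n) (Fin n) ℂ) :
    Matrix (Fin p × Fin n) (Fin n) ℂ :=
  fun ki j => B ki.1 ki.2 j

/-- `fold` is the inverse of `unfold`. -/
def fold {n p : ℕ} (M : Matrix (Fin p × Fin n) (Fin n) ℂ) :
    Fin p → Matrix (Fin n) (Fin n) ℂ :=
  fun k i j => M (k, i) j

/-- The tensor t-product `X * Y := fold (bcirc X · unfold Y)`. -/
noncomputable def tProd {n p : ℕ} (X Y : Fin p → Matrix (Fin n) (Fin n) ℂ) :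
    Fin p → Matrix (Fin n) (Fin n) ℂ :=
  fold (bcirc X * unfold Y)

/-- The tensor transpose: conjugate-transpose each frontal slice and reverse the order
of slices `2` through `p` (in zero-based face indexing, face `k ↦ (A (-k))ᴴ`). -/
def tTranspose {n p : ℕ} (A : Fin p → Matrix (Fin n) (Fin n) ℂ) :
    Fin p → Matrix (Fin n) (Fin n) ℂ :=
  fun k => (A (-k))ᴴ

/-- The trace of the first frontal slice of a tensor. -/
noncomputable def trace1 {n p : ℕ} [NeZero p] (A : Fin p → Matrix (Fin n) (Fin n) ℂ) : ℂ :=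
  (A 0).trace

/-- The pairing `⟨A, B⟩ := trace₍₁₎(Bᴴ * A)` coincides with the standard inner product
of the vectorized tensors: `trace₍₁₎(Bᴴ * A) = Σ_{i,j,k} conj(B(i,j,k)) A(i,j,k)`
(hence it defines an inner product on `ℂ^{n×n×p}`). -/
theorem trace1_tProd_tTranspose_eq_inner {n p : ℕ} [NeZero p]
    (A B : Fin p → Matrix (Fin n) (Fin n) ℂ) :
    trace1 (tProd (tTranspose B) A) =
      ∑ k : Fin p, ∑ i : Fin n, ∑ j : Fin n, conj (B k i j) * A k i j := by
  simp only [trace1, tProd, fold, bcirc, unfold, tTranspose, Matrix.trace,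
    Matrix.mul_apply, Matrix.diag, Matrix.conjTranspose_apply, Fintype.sum_prod_type]
  rw [Finset.sum_comm]
  refine Finset.sum_congr rfl fun k _ => ?_
  rw [Finset.sum_comm]
  refine Finset.sum_congr rfl fun i _ => ?_
  refine Finset.sum_congr rfl fun j _ => ?_
  simp [zero_sub, neg_neg, mul_comm]
end

section
/- For A ∈ ℂ^{n×n×p}, ‖A‖_F = √(trace₍₁₎(Aᴴ * A)), i.e., the tensor Frobenius norm squared equals the trace of the first frontal slice of Aᴴ * A. -/
/-!
The first face of `Aᴴ * A` is `∑ₗ (A l)ᴴ (A l)`: the circulant index `0 - l` exactly undoes the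
face reversal `k ↦ -k` in `Aᴴ`. The trace of each `Mᴴ M` is the sum of the squared moduli of the
entries of `M`, a nonnegative real.
-/

open Matrix

theorem Matrix.trace_conjTranspose_mul_self_eq_sum_norm_sq {𝕜 m n : Type*} [RCLike 𝕜]
    [Fintype m] [Fintype n] (M : Matrix m n 𝕜) :
    (Mᴴ * M).trace = ((∑ i, ∑ j, ‖M i j‖ ^ 2 : ℝ) : 𝕜) := by
  simp only [trace, diag, mul_apply, conjTranspose_apply, RCLike.star_def, RCLike.conj_mul]
  rw [Finset.sum_comm]
  push_cast
  rfl

theorem tProd_apply {n p : ℕ} (X Y : Fin p → Matrix (Fin n) (Fin n) ℂ) (k : Fin p) :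
    tProd X Y k = ∑ l, X (k - l) * Y l := by
  ext i j
  simp only [tProd, fold, bcirc, unfold, mul_apply, Fintype.sum_prod_type, Matrix.sum_apply]

theorem tProd_tTranspose_self_zero {n p : ℕ} [NeZero p] (A : Fin p → Matrix (Fin n) (Fin n) ℂ) :
    tProd (tTranspose A) A 0 = ∑ l, (A l)ᴴ * A l := by
  simp only [tProd_apply, tTranspose, zero_sub, neg_neg]

theorem trace1_tProd_tTranspose_self {n p : ℕ} [NeZero p]
    (A : Fin p → Matrix (Fin n) (Fin n) ℂ) :
    trace1 (tProd (tTranspose A) A) = ((∑ k, ∑ i, ∑ j, ‖A k i j‖ ^ 2 : ℝ) : ℂ) := by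
  rw [trace1, tProd_tTranspose_self_zero, trace_sum, Complex.ofReal_sum]
  exact Finset.sum_congr rfl fun k _ => trace_conjTranspose_mul_self_eq_sum_norm_sq (A k)

/-- `‖A‖_F = √(trace₍₁₎(Aᴴ * A))`: the tensor Frobenius norm is the square root of the
trace of the first frontal slice of `Aᴴ * A` (which is a nonnegative real number). -/
theorem frobT_eq_sqrt_trace1 {n p : ℕ} [NeZero p]
    (A : Fin p → Matrix (Fin n) (Fin n) ℂ) :
    frobT A = Real.sqrt (trace1 (tProd (tTranspose A) A)).re ∧
      (trace1 (tProd (tTranspose A) A)).im = 0 := by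
  rw [trace1_tProd_tTranspose_self, Complex.ofReal_re, Complex.ofReal_im]
  exact ⟨rfl, rfl⟩
end
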